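/- arXiv:2308.12807 — 4 statements merged into one kernel-verified Lean document; each statement's English description precedes it below -/
import Mathlib

section
/- Let r be a natural number and K : ℝ → ℝ be integrable with compact support. Then the following are equivalent: (i) ∫_ℝ K(x) dx = 1 and ∫_ℝ K(x) x^k dx = 0 for all integers k with 1 ≤ k ≤ r; (ii) for every x ∈ ℝ and every integer k with 0 ≤ k ≤ r, ∫_ℝ K(x − y) y^k dy = x^k. -/
/-!
Writing `m k = ∫ K t * t ^ k` for the moments of `K`, the substitution `y = x - t` and the
binomial theorem give
`∫ K (x - y) * y ^ k = ∑ j ≤ k, choose k j * x ^ j * (-1) ^ (k - j) * m (k - j)`.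
Condition (i) says `m k = 0 ^ k` for `k ≤ r`, i.e. the moments of `K` agree with those of the
Dirac mass at `0`; then the sum is the binomial expansion of `(x + 0) ^ k`. Conversely, at
`x = 0` the sum reduces to its `j = 0` term, so (ii) gives `(-1) ^ k * m k = 0 ^ k`.
-/

open MeasureTheory

theorem MeasureTheory.Integrable.mul_continuous_of_hasCompactSupport {X R : Type*}
    [TopologicalSpace X] [T2Space X] [MeasurableSpace X] [OpensMeasurableSpace X] [NormedRing R]
    [SecondCountableTopologyEither X R] {μ : Measure X} {f g : X → R} (hf : Integrable f μ)
    (hfc : HasCompactSupport f) (hg : Continuous g) :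
    Integrable (fun x => f x * g x) μ :=
  (integrableOn_iff_integrable_of_support_subset
      ((Function.support_mul_subset_left f g).trans (subset_tsupport f))).mp
    (hf.integrableOn.mul_continuousOn hg.continuousOn hfc)

theorem integral_comp_sub_mul_pow_eq_sum {K : ℝ → ℝ} (hK : Integrable K)
    (hsupp : HasCompactSupport K) (x : ℝ) (k : ℕ) :
    ∫ y, K (x - y) * y ^ k =
      ∑ j ∈ Finset.range (k + 1),
        x ^ j * ((-1) ^ (k - j) * ∫ t, K t * t ^ (k - j)) * k.choose j := by
  have hmoment (i : ℕ) : Integrable (fun t => K t * t ^ i) :=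
    hK.mul_continuous_of_hasCompactSupport hsupp (continuous_pow i)
  calc ∫ y, K (x - y) * y ^ k
      = ∫ t, K t * (x - t) ^ k := by
        simpa using integral_sub_left_eq_self (fun t => K t * (x - t) ^ k) volume x
    _ = ∫ t, ∑ j ∈ Finset.range (k + 1),
          x ^ j * ((-1) ^ (k - j) * (K t * t ^ (k - j))) * k.choose j := by
        congr 1 with t
        rw [sub_eq_add_neg, add_pow, Finset.mul_sum]
        refine Finset.sum_congr rfl fun j _ => ?_
        rw [neg_pow]
        ring
    _ = _ := by
        rw [integral_finsetSum _ fun j _ =>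
          (((hmoment _).const_mul _).const_mul _).mul_const _]
        simp only [integral_mul_const, integral_const_mul]

theorem forall_le_eq_zero_pow_iff {M : Type*} [MonoidWithZero M] (r : ℕ) (m : ℕ → M) :
    (∀ k ≤ r, m k = 0 ^ k) ↔ m 0 = 1 ∧ ∀ k, 1 ≤ k → k ≤ r → m k = 0 := by
  constructor
  · intro h
    refine ⟨by simpa using h 0 r.zero_le, fun k hk1 hkr => ?_⟩
    simpa [zero_pow (by omega : k ≠ 0)] using h k hkr
  · rintro ⟨h0, hm⟩ (_ | k) hk
    · simpa using h0
    · simpa using hm (k + 1) k.succ_pos hk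

theorem stmt_0 (r : ℕ) (K : ℝ → ℝ) (hK : Integrable K) (hsupp : HasCompactSupport K) :
    ((∫ x : ℝ, K x) = 1 ∧ ∀ k : ℕ, 1 ≤ k → k ≤ r → (∫ x : ℝ, K x * x ^ k) = 0) ↔
      (∀ x : ℝ, ∀ k : ℕ, k ≤ r → (∫ y : ℝ, K (x - y) * y ^ k) = x ^ k) := by
  have hK0 : ∫ x, K x = ∫ x, K x * x ^ 0 := by simp
  rw [hK0, ← forall_le_eq_zero_pow_iff r fun k => ∫ x, K x * x ^ k]
  simp only [integral_comp_sub_mul_pow_eq_sum hK hsupp]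
  constructor
  · intro hm x k hk
    have hdirac : ∀ j ∈ Finset.range (k + 1),
        (-1 : ℝ) ^ (k - j) * ∫ t, K t * t ^ (k - j) = 0 ^ (k - j) := by
      intro j _
      rw [hm (k - j) (by omega), ← mul_pow, mul_zero]
    rw [Finset.sum_congr rfl fun j hj => by rw [hdirac j hj], ← add_pow, add_zero]
  · intro h k hk
    have hx0 := h 0 k hk
    simp only [Finset.sum_range_succ', zero_pow (Nat.succ_ne_zero _), zero_mul,
      Finset.sum_const_zero, zero_add, pow_zero, one_mul, Nat.sub_zero, Nat.choose_zero_right,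
      Nat.cast_one, mul_one] at hx0
    calc ∫ t, K t * t ^ k = (-1) ^ k * ((-1) ^ k * ∫ t, K t * t ^ k) := by
          rw [← mul_assoc, ← mul_pow]; norm_num
      _ = 0 ^ k := by rw [hx0, ← mul_pow, mul_zero]
end

section
/- Let r be a natural number, s > 0, and K : ℝ → ℝ be integrable with support contained in [−s, s], satisfying ∫_ℝ K(x) dx = 1 and ∫_ℝ K(x) x^k dx = 0 for 1 ≤ k ≤ r. Let H > 0 and let u : ℝ → ℝ be (r+1)-times continuously differentiable with |u^{(r+1)}(y)| ≤ M for all y ∈ ℝ. Then for every x ∈ ℝ, |∫_ℝ (1/H) K((x − y)/H) u(y) dy − u(x)| ≤ M (sH)^{r+1} (∫_ℝ |K(t)| dt) / (r+1)!. -/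
open MeasureTheory intervalIntegral

lemma abs_pow_integral (m : ℕ) (x y : ℝ) :
    |∫ t in x..y, |t - x| ^ m| = |y - x| ^ (m + 1) / (m + 1) := by
  have hm : ((m:ℝ) + 1) ≠ 0 := by positivity
  have h : ∫ t in x..y, |t - x| ^ m = ∫ t in (x - x)..(y - x), |t| ^ m :=
    intervalIntegral.integral_comp_sub_right (fun t => |t| ^ m) x
  rw [sub_self] at h
  rw [h]
  rcases le_or_gt 0 (y - x) with hb | hb
  · rw [intervalIntegral.integral_congr (g := fun t => t ^ m) ?_]
    · rw [integral_pow, zero_pow (Nat.succ_ne_zero m), sub_zero, abs_div,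
        abs_of_nonneg (pow_nonneg hb _), abs_of_nonneg hb,
        abs_of_nonneg (by positivity : (0:ℝ) ≤ (m:ℝ)+1)]
    · intro t ht
      rw [Set.uIcc_of_le hb] at ht
      simp [abs_of_nonneg ht.1]
  · rw [intervalIntegral.integral_congr (g := fun t => (-t) ^ m) ?_]
    · have h2 : ∫ t in (0:ℝ)..(y-x), (-t)^m = ∫ t in (-(y-x))..(-(0:ℝ)), t ^ m :=
        intervalIntegral.integral_comp_neg (fun t => t ^ m)
      have hxy : -(y - x) = |y - x| := by rw [abs_of_neg hb]
      rw [h2, neg_zero, integral_pow, zero_pow (Nat.succ_ne_zero m), zero_sub, abs_div, abs_neg,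
        hxy, abs_of_nonneg (pow_nonneg (abs_nonneg _) _),
        abs_of_nonneg (by positivity : (0:ℝ) ≤ (m:ℝ)+1)]
    · intro t ht
      rw [Set.uIcc_of_ge hb.le] at ht
      simp [abs_of_nonpos ht.2]


lemma taylor_abs_bound : ∀ (n : ℕ) (f : ℝ → ℝ), ContDiff ℝ (n+1) f →
    ∀ M : ℝ, (∀ y, |iteratedDeriv (n+1) f y| ≤ M) → ∀ x y : ℝ,
    |f y - ∑ k ∈ Finset.range (n+1), iteratedDeriv k f x / k.factorial * (y - x)^k|
      ≤ M * |y - x|^(n+1) / (n+1).factorial := by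
  intro n
  induction n with
  | zero =>
    intro f hf M hM x y
    have hd : ∀ z ∈ (Set.univ : Set ℝ), DifferentiableAt ℝ f z := fun z _ =>
      (hf.differentiable (by norm_num)).differentiableAt
    have hb : ∀ z ∈ (Set.univ : Set ℝ), ‖deriv f z‖ ≤ M := by
      intro z _
      have := hM z
      rwa [iteratedDeriv_one] at this
    have := Convex.norm_image_sub_le_of_norm_deriv_le hd hb convex_univ
      (Set.mem_univ x) (Set.mem_univ y)
    simpa using this
  | succ n ih =>
    intro f hf M hM x y
    have hM0 : 0 ≤ M := le_trans (abs_nonneg _) (hM x)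
    set g := deriv f with hg_def
    have hg : ContDiff ℝ (n+1) g := by
      have := (contDiff_succ_iff_deriv.mp hf).2.2
      exact_mod_cast this
    have hgM : ∀ z, |iteratedDeriv (n+1) g z| ≤ M := by
      intro z
      have h1 : iteratedDeriv (n+1+1) f = iteratedDeriv (n+1) g := iteratedDeriv_succ'
      have := hM z
      rwa [h1] at this
    -- remainder and its derivative
    set P : ℝ → ℝ := fun t => ∑ k ∈ Finset.range (n+2),
      iteratedDeriv k f x / k.factorial * (t - x)^k with hP
    set Q : ℝ → ℝ := fun t => ∑ k ∈ Finset.range (n+1),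
      iteratedDeriv k g x / k.factorial * (t - x)^k with hQ
    have hder : ∀ t : ℝ, HasDerivAt (fun z => f z - P z) (g t - Q t) t := by
      intro t
      have hfd : HasDerivAt f (g t) t :=
        ((hf.differentiable (by norm_num)) t).hasDerivAt
      have hPd : HasDerivAt P (Q t) t := by
        have hterm : ∀ k : ℕ, HasDerivAt (fun z : ℝ => iteratedDeriv k f x / k.factorial * (z - x)^k)
            (iteratedDeriv k f x / k.factorial * (k * (t - x)^(k-1))) t := by
          intro k
          have h := (((hasDerivAt_id t).sub_const x).pow k).const_mul
            (iteratedDeriv k f x / (k.factorial : ℝ))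
          simpa using h
        have hsum : HasDerivAt P (∑ k ∈ Finset.range (n+2),
            iteratedDeriv k f x / k.factorial * (k * (t - x)^(k-1))) t :=
          HasDerivAt.fun_sum (fun k _ => hterm k)
        convert hsum using 1
        rw [Finset.sum_range_succ']
        simp only [Nat.cast_zero, zero_mul, mul_zero, Nat.factorial_zero, add_zero]
        apply Finset.sum_congr rfl
        intro k _
        have hk : iteratedDeriv (k+1) f x = iteratedDeriv k g x := by
          rw [iteratedDeriv_succ']
        rw [← hk]
        have : ((k+1).factorial : ℝ) = (k+1) * k.factorial := by
          rw [Nat.factorial_succ]; push_cast; ring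
        rw [this]
        have hkf : (k.factorial : ℝ) ≠ 0 := by positivity
        have hk1 : ((k:ℝ)+1) ≠ 0 := by positivity
        field_simp
        rw [Nat.add_sub_cancel]; push_cast
        ring
      exact hfd.sub hPd
    have hRx : f x - P x = 0 := by
      have : P x = f x := by
        simp only [hP]
        rw [Finset.sum_eq_single 0]
        · simp
        · intro k _ hk
          simp [sub_self, zero_pow hk]
        · simp
      rw [this, sub_self]
    have hQcont : Continuous (fun t => g t - Q t) := by
      apply (hg.continuous).sub
      apply continuous_finset_sum
      intro k _
      exact (continuous_const.mul ((continuous_id.sub continuous_const).pow k))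
    have hint : ∫ t in x..y, (g t - Q t) = (f y - P y) - (f x - P x) :=
      intervalIntegral.integral_eq_sub_of_hasDerivAt (fun t _ => hder t)
        (hQcont.intervalIntegrable x y)
    have hRy : f y - P y = ∫ t in x..y, (g t - Q t) := by
      rw [hint, hRx, sub_zero]
    rw [hRy]
    have hbound : ∀ t : ℝ, ‖g t - Q t‖ ≤ M / (n+1).factorial * |t - x|^(n+1) := by
      intro t
      have := ih g hg M hgM x t
      rw [Real.norm_eq_abs]
      calc |g t - Q t| ≤ M * |t - x|^(n+1) / (n+1).factorial := this
        _ = M / (n+1).factorial * |t - x|^(n+1) := by ring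
    have hgint : IntervalIntegrable (fun t => M / (n+1).factorial * |t - x|^(n+1)) volume x y := by
      apply Continuous.intervalIntegrable
      exact continuous_const.mul (((continuous_id.sub continuous_const).abs).pow _)
    have := intervalIntegral.norm_integral_le_abs_of_norm_le
      (f := fun t => g t - Q t) (g := fun t => M / (n+1).factorial * |t - x|^(n+1))
      (Filter.Eventually.of_forall (fun t => hbound t)) hgint
    rw [Real.norm_eq_abs] at this
    refine le_trans this ?_
    rw [intervalIntegral.integral_const_mul, abs_mul,
      abs_of_nonneg (by positivity : (0:ℝ) ≤ M / (n+1).factorial),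
      abs_pow_integral (n+1) x y]
    have h2 : ((n+1+1).factorial : ℝ) = (n+1+1) * (n+1).factorial := by
      rw [Nat.factorial_succ]; push_cast; ring
    rw [h2]
    have hkf : ((n+1).factorial : ℝ) ≠ 0 := by positivity
    have : ((n:ℝ)+1+1) ≠ 0 := by positivity
    apply le_of_eq
    rw [div_mul_div_comm]
    push_cast
    ring

theorem stmt_4 (r : ℕ) (s : ℝ) (hs : 0 < s) (K : ℝ → ℝ) (hK : Integrable K)
    (hsupp : tsupport K ⊆ Set.Icc (-s) s)
    (hcons : (∫ x : ℝ, K x) = 1)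
    (hmom : ∀ k : ℕ, 1 ≤ k → k ≤ r → (∫ x : ℝ, K x * x ^ k) = 0)
    (H : ℝ) (hH : 0 < H) (u : ℝ → ℝ) (hu : ContDiff ℝ (r + 1) u)
    (M : ℝ) (hM : ∀ y : ℝ, |iteratedDeriv (r + 1) u y| ≤ M) :
    ∀ x : ℝ,
      |(∫ y : ℝ, (1 / H) * K ((x - y) / H) * u y) - u x| ≤
        M * (s * H) ^ (r + 1) * (∫ t : ℝ, |K t|) / (Nat.factorial (r + 1)) := by
  intro x
  have hH0 : H ≠ 0 := ne_of_gt hH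
  have hM0 : 0 ≤ M := le_trans (abs_nonneg _) (hM x)
  set F : ℝ → ℝ := fun z => K (z / H) * u (x - z) with hF
  -- Step 1: change of variables
  have h1 : (∫ y : ℝ, (1 / H) * K ((x - y) / H) * u y) = ∫ t : ℝ, K t * u (x - H * t) := by
    have e1 : (∫ y : ℝ, (1 / H) * K ((x - y) / H) * u y) = ∫ y : ℝ, (1 / H) * F (x - y) := by
      congr 1; funext y
      simp only [hF, sub_sub_cancel]
      ring
    rw [e1, MeasureTheory.integral_const_mul, MeasureTheory.integral_sub_left_eq_self F volume x]
    have e2 : ∫ t : ℝ, F (H * t) = |H⁻¹| • ∫ z : ℝ, F z :=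
      MeasureTheory.Measure.integral_comp_mul_left F H
    have e3 : ∫ t : ℝ, F (H * t) = ∫ t : ℝ, K t * u (x - H * t) := by
      congr 1; funext t
      simp only [hF, mul_div_cancel_left₀ _ hH0]
    rw [← e3, e2, abs_of_pos (inv_pos.mpr hH), smul_eq_mul, one_div]
  -- integrability facts
  have hKpow : ∀ k : ℕ, Integrable (fun t : ℝ => K t * t ^ k) := by
    intro k
    apply Integrable.mono' ((hK.abs).const_mul (s ^ k))
    · exact hK.aestronglyMeasurable.mul (continuous_pow k).aestronglyMeasurable
    · refine Filter.Eventually.of_forall fun t => ?_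
      by_cases ht : t ∈ tsupport K
      · have hts := hsupp ht
        have habs : |t| ≤ s := abs_le.mpr ⟨hts.1, hts.2⟩
        rw [Real.norm_eq_abs, abs_mul, abs_pow, mul_comm]
        exact mul_le_mul_of_nonneg_right
          (pow_le_pow_left₀ (abs_nonneg t) habs k) (abs_nonneg _)
      · rw [image_eq_zero_of_notMem_tsupport ht]
        simp only [zero_mul, norm_zero]
        positivity
  have hKmul : ∀ g : ℝ → ℝ, Continuous g → Integrable (fun t : ℝ => K t * g t) := by
    intro g hg
    obtain ⟨C, hC⟩ := (isCompact_Icc (a := -s) (b := s)).exists_bound_of_continuousOn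
      hg.continuousOn
    apply Integrable.mono' ((hK.abs).const_mul C)
    · exact hK.aestronglyMeasurable.mul hg.aestronglyMeasurable
    · refine Filter.Eventually.of_forall fun t => ?_
      by_cases ht : t ∈ tsupport K
      · rw [Real.norm_eq_abs, abs_mul, mul_comm]
        have hgt : |g t| ≤ C := by
          have := hC t (hsupp ht); rwa [Real.norm_eq_abs] at this
        exact mul_le_mul_of_nonneg_right hgt (abs_nonneg _)
      · simp [image_eq_zero_of_notMem_tsupport ht]
  set Pv : ℝ → ℝ := fun t => ∑ k ∈ Finset.range (r+1),
    iteratedDeriv k u x / k.factorial * ((x - H * t) - x) ^ k with hPv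
  have hPv_cont : Continuous Pv := by
    apply continuous_finset_sum
    intro k _
    exact continuous_const.mul (((continuous_const.sub
      (continuous_const.mul continuous_id)).sub continuous_const).pow k)
  have hPv_int : Integrable (fun t : ℝ => K t * Pv t) := hKmul Pv hPv_cont
  have hu_cont : Continuous (fun t : ℝ => u (x - H * t)) :=
    hu.continuous.comp (continuous_const.sub (continuous_const.mul continuous_id))
  have hu_int : Integrable (fun t : ℝ => K t * u (x - H * t)) := hKmul _ hu_cont
  -- Step 2: moments kill all but the constant term
  have h2 : ∫ t : ℝ, K t * Pv t = u x := by
    have e4 : ∀ t : ℝ, K t * Pv t = ∑ k ∈ Finset.range (r+1),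
        (iteratedDeriv k u x / k.factorial * (-H) ^ k) * (K t * t ^ k) := by
      intro t
      rw [hPv, Finset.mul_sum]
      apply Finset.sum_congr rfl
      intro k _
      have : (x - H * t) - x = (-H) * t := by ring
      rw [this, mul_pow]
      ring
    rw [MeasureTheory.integral_congr_ae (Filter.Eventually.of_forall e4)]
    rw [MeasureTheory.integral_finset_sum _ (fun k _ => (hKpow k).const_mul _)]
    rw [Finset.sum_eq_single 0]
    · simp only [pow_zero, iteratedDeriv_zero, Nat.factorial_zero, Nat.cast_one, div_one,
        mul_one]
      rw [MeasureTheory.integral_const_mul, hcons, mul_one]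
    · intro k hk hk0
      rw [MeasureTheory.integral_const_mul, hmom k (Nat.one_le_iff_ne_zero.mpr hk0)
        (Nat.lt_succ_iff.mp (Finset.mem_range.mp hk)), mul_zero]
    · intro h0
      exact absurd (Finset.mem_range.mpr (Nat.succ_pos r)) h0
  rw [h1, ← h2, ← MeasureTheory.integral_sub hu_int hPv_int]
  have e5 : ∀ t : ℝ, K t * u (x - H * t) - K t * Pv t = K t * (u (x - H * t) - Pv t) := by
    intro t; ring
  rw [MeasureTheory.integral_congr_ae (Filter.Eventually.of_forall e5)]
  set cst : ℝ := M * (s * H) ^ (r + 1) / (r + 1).factorial with hcst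
  have hcst0 : 0 ≤ cst := by positivity
  have hbd : ∀ t : ℝ, |K t * (u (x - H * t) - Pv t)| ≤ |K t| * cst := by
    intro t
    by_cases ht : t ∈ tsupport K
    · rw [abs_mul]
      apply mul_le_mul_of_nonneg_left _ (abs_nonneg _)
      have htay := taylor_abs_bound r u hu M hM x (x - H * t)
      have hPvt : Pv t = ∑ k ∈ Finset.range (r+1),
          iteratedDeriv k u x / k.factorial * ((x - H * t) - x) ^ k := rfl
      rw [hPvt]
      refine le_trans htay ?_
      rw [hcst]
      have habs : |x - H * t - x| ≤ s * H := by
        have h6 : x - H * t - x = -(H * t) := by ring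
        rw [h6, abs_neg, abs_mul, abs_of_pos hH]
        have h7 : |t| ≤ s := abs_le.mpr ⟨(hsupp ht).1, (hsupp ht).2⟩
        nlinarith [abs_nonneg t]
      gcongr
    · simp [image_eq_zero_of_notMem_tsupport ht, hcst0]
  calc |∫ t : ℝ, K t * (u (x - H * t) - Pv t)|
      ≤ ∫ t : ℝ, |K t * (u (x - H * t) - Pv t)| :=
      by
        simpa only [Real.norm_eq_abs] using MeasureTheory.norm_integral_le_integral_norm
          (fun t : ℝ => K t * (u (x - H * t) - Pv t))
    _ ≤ ∫ t : ℝ, |K t| * cst := by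
        have hdiff_int : Integrable (fun t : ℝ => K t * (u (x - H * t) - Pv t)) := by
          have h8 := hu_int.sub hPv_int
          simpa [mul_sub, Pi.sub_def] using h8
        exact MeasureTheory.integral_mono hdiff_int.abs (hK.abs.mul_const cst) hbd
    _ = M * (s * H) ^ (r + 1) * (∫ t : ℝ, |K t|) / (Nat.factorial (r + 1)) := by
        rw [MeasureTheory.integral_mul_const, hcst]
        ring
end

section
/- Let ℓ ≥ 1 and let r be an even natural number. Let B_ℓ be the centered cardinal B-spline of order ℓ, let c_0, …, c_r be real coefficients with the symmetry c_γ = c_{r−γ} for all γ, let H > 0, and define the symmetric SIAC kernel K_H(x) = (1/H) Σ_{γ=0}^{r} c_γ B_ℓ(x/H − (γ − r/2)). Then for every k ∈ ℝ with k ≠ 0, ∫_ℝ K_H(x) e^{−i k x} dx = (sin(kH/2)/(kH/2))^ℓ · (c_{r/2} + 2 Σ_{m=1}^{r/2} c_{r/2+m} cos(m k H)). In particular, the Fourier transform of K_H is real-valued. -/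
open MeasureTheory

/-- The indicator function of `[-1/2, 1/2]`, i.e. the B-spline of order 1. -/
noncomputable def Bone : ℝ → ℝ :=
  Set.indicator (Set.Icc (-(1 / 2) : ℝ) (1 / 2)) (fun _ => 1)

/-- `Bspline ℓ` is the centered cardinal B-spline of order `ℓ` (for `ℓ ≥ 1`):
the `ℓ`-fold convolution power of the indicator of `[-1/2, 1/2]`. -/
noncomputable def Bspline : ℕ → ℝ → ℝ
  | 0 => fun _ => 0
  | 1 => Bone
  | (n + 2) => fun x => ∫ y : ℝ, Bspline (n + 1) (x - y) * Bone y

lemma Bone_integrable : Integrable Bone := by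
  unfold Bone
  rw [integrable_indicator_iff measurableSet_Icc]
  exact integrableOn_const (by simp [Real.volume_Icc])

lemma Bspline_integrable : ∀ n, Integrable (Bspline n) := by
  have key : ∀ n, Integrable (Bspline (n + 1)) := by
    intro n
    induction n with
    | zero => exact Bone_integrable
    | succ m ih =>
      have hc : Bspline (m + 2) = MeasureTheory.convolution Bone (Bspline (m + 1))
          (ContinuousLinearMap.mul ℝ ℝ) volume := by
        funext x
        show (∫ y : ℝ, Bspline (m + 1) (x - y) * Bone y)
          = ∫ t : ℝ, Bone t * Bspline (m + 1) (x - t)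
        simp_rw [mul_comm]
      rw [hc]
      exact Bone_integrable.integrable_convolution _ ih
  intro n
  cases n with
  | zero => simp only [Bspline]; exact integrable_zero ℝ ℝ (volume : Measure ℝ)
  | succ m => exact key m

lemma norm_exp_eq (s x : ℝ) : ‖Complex.exp (-(Complex.I * s * x))‖ = 1 := by
  rw [Complex.norm_exp]; simp

lemma exp_meas (s : ℝ) : Continuous (fun x : ℝ => Complex.exp (-(Complex.I * s * x))) := by
  fun_prop

lemma Bhat_one {s : ℝ} (hs : s ≠ 0) :
    (∫ x : ℝ, (Bone x : ℂ) * Complex.exp (-(Complex.I * s * x)))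
      = ((Real.sin (s / 2) / (s / 2) : ℝ) : ℂ) := by
  have h1 : ∀ x : ℝ, (Bone x : ℂ) * Complex.exp (-(Complex.I * s * x))
      = Set.indicator (Set.Icc (-(1 / 2) : ℝ) (1 / 2))
          (fun x : ℝ => Complex.exp (-(Complex.I * s * x))) x := by
    intro x
    by_cases hx : x ∈ Set.Icc (-(1 / 2) : ℝ) (1 / 2)
    · rw [Set.indicator_of_mem hx, Bone, Set.indicator_of_mem hx]; simp
    · rw [Set.indicator_of_notMem hx, Bone, Set.indicator_of_notMem hx]; simp
  simp_rw [h1]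
  rw [integral_indicator measurableSet_Icc, integral_Icc_eq_integral_Ioc,
    ← intervalIntegral.integral_of_le (by norm_num : (-(1/2) : ℝ) ≤ 1/2)]
  have h2 : ∀ x : ℝ, -(Complex.I * s * x) = (-(Complex.I * s)) * x := by intro x; ring
  simp_rw [h2]
  rw [integral_exp_mul_complex (by simp [Complex.ext_iff, hs])]
  have hsC : (s : ℂ) ≠ 0 := Complex.ofReal_ne_zero.2 hs
  rw [div_eq_iff (by simp [Complex.ext_iff, hs])]
  have e1 : -(Complex.I * (s:ℂ)) * ((1/2 : ℝ) : ℂ) = (-((s:ℂ)/2)) * Complex.I := by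
    push_cast; ring
  have e2 : -(Complex.I * (s:ℂ)) * ((-(1/2) : ℝ) : ℂ) = ((s:ℂ)/2) * Complex.I := by
    push_cast; ring
  rw [e1, e2, Complex.exp_mul_I, Complex.exp_mul_I, Complex.sin_neg, Complex.cos_neg]
  push_cast
  field_simp
  ring

lemma mul_exp_integrable (n : ℕ) (s : ℝ) :
    Integrable (fun x : ℝ => (Bspline n x : ℂ) * Complex.exp (-(Complex.I * s * x))) := by
  have h := (Bspline_integrable n).ofReal (𝕜 := ℂ)
  have h2 := h.bdd_mul (exp_meas s).aestronglyMeasurable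
    (Filter.Eventually.of_forall fun x => le_of_eq (norm_exp_eq s x))
  simpa [mul_comm] using h2

lemma Bhat_step (n : ℕ) (s : ℝ) :
    (∫ x : ℝ, (Bspline (n+2) x : ℂ) * Complex.exp (-(Complex.I * s * x)))
      = (∫ x : ℝ, (Bspline (n+1) x : ℂ) * Complex.exp (-(Complex.I * s * x)))
        * (∫ x : ℝ, (Bone x : ℂ) * Complex.exp (-(Complex.I * s * x))) := by
  set E : ℝ → ℂ := fun x => Complex.exp (-(Complex.I * s * x)) with hE
  have hprod : Integrable (fun p : ℝ × ℝ =>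
      ((Bone p.2 * Bspline (n+1) (p.1 - p.2) : ℝ) : ℂ) * E p.1) (volume.prod volume) := by
    have h1 : Integrable (fun p : ℝ × ℝ => Bone p.2 * Bspline (n+1) (p.1 - p.2))
        (volume.prod volume) := by
      have := Bone_integrable.convolution_integrand (ContinuousLinearMap.mul ℝ ℝ)
        (Bspline_integrable (n+1))
      simpa using this
    have h2 := h1.ofReal (𝕜 := ℂ)
    have h3 := h2.bdd_mul (((exp_meas s).comp continuous_fst).aestronglyMeasurable)
      (Filter.Eventually.of_forall fun p => le_of_eq (norm_exp_eq s p.1))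
    have heq : (fun p : ℝ × ℝ => ((Bone p.2 * Bspline (n+1) (p.1 - p.2) : ℝ) : ℂ) * E p.1)
        = fun p : ℝ × ℝ => (((fun x : ℝ => Complex.exp (-(Complex.I * s * x))) ∘ Prod.fst) p)
            * ((Bone p.2 * Bspline (n+1) (p.1 - p.2) : ℝ) : ℂ) := by
      funext p; rw [hE]; simp only [Function.comp_apply]; ring
    rw [heq]; exact h3
  have key : ∀ x : ℝ, (Bspline (n+2) x : ℂ) * E x
      = ∫ y : ℝ, ((Bone y * Bspline (n+1) (x - y) : ℝ) : ℂ) * E x := by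
    intro x
    have hx : Bspline (n+2) x = ∫ y : ℝ, Bone y * Bspline (n+1) (x - y) := by
      show (∫ y : ℝ, Bspline (n+1) (x - y) * Bone y) = _
      simp_rw [mul_comm]
    have hcast : Complex.ofReal (∫ y : ℝ, Bone y * Bspline (n+1) (x - y))
        = ∫ y : ℝ, ((Bone y * Bspline (n+1) (x - y) : ℝ) : ℂ) := integral_ofReal.symm
    rw [hx, hcast, ← integral_mul_const]
  show (∫ x : ℝ, (Bspline (n+2) x : ℂ) * E x) = (∫ x : ℝ, (Bspline (n+1) x : ℂ) * E x) * (∫ x : ℝ, (Bone x : ℂ) * E x)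
  simp_rw [key]
  rw [integral_integral_swap hprod]
  have inner : ∀ y : ℝ, (∫ x : ℝ, ((Bone y * Bspline (n+1) (x - y) : ℝ) : ℂ) * E x)
      = (∫ x : ℝ, (Bspline (n+1) x : ℂ) * E x) * ((Bone y : ℂ) * E y) := by
    intro y
    have hxy : ∀ x : ℝ, ((Bone y * Bspline (n+1) (x - y) : ℝ) : ℂ) * E x
        = ((Bone y : ℂ) * E y) * ((Bspline (n+1) (x - y) : ℂ) * E (x - y)) := by
      intro x
      have hEx : E x = E (x - y) * E y := by
        simp only [hE, ← Complex.exp_add]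
        congr 1; push_cast; ring
      rw [hEx]; push_cast; ring
    simp_rw [hxy]
    rw [integral_const_mul]
    rw [integral_sub_right_eq_self (fun t : ℝ => (Bspline (n+1) t : ℂ) * E t) y]
    ring
  simp_rw [inner]
  rw [integral_const_mul]

lemma Bhat_eq {s : ℝ} (hs : s ≠ 0) (n : ℕ) :
    (∫ x : ℝ, (Bspline (n+1) x : ℂ) * Complex.exp (-(Complex.I * s * x)))
      = (((Real.sin (s / 2) / (s / 2)) ^ (n+1) : ℝ) : ℂ) := by
  induction n with
  | zero =>
    have : (∫ x : ℝ, (Bspline 1 x : ℂ) * Complex.exp (-(Complex.I * s * x)))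
        = ∫ x : ℝ, (Bone x : ℂ) * Complex.exp (-(Complex.I * s * x)) := rfl
    rw [this, Bhat_one hs]; push_cast; ring
  | succ m ih =>
    rw [Bhat_step m s, ih, Bhat_one hs]
    push_cast; ring

lemma exp_pair (θ : ℝ) :
    Complex.exp (-(Complex.I * θ)) + Complex.exp (Complex.I * θ)
      = 2 * ((Real.cos θ : ℝ) : ℂ) := by
  rw [show -(Complex.I * (θ:ℂ)) = ((-θ : ℝ) : ℂ) * Complex.I by push_cast; ring,
      show Complex.I * (θ:ℂ) = ((θ:ℝ):ℂ) * Complex.I by ring,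
      Complex.exp_mul_I, Complex.exp_mul_I]
  push_cast
  rw [Complex.cos_neg, Complex.sin_neg]
  ring

lemma shifted (ℓ : ℕ) (H a k : ℝ) (hH : 0 < H) :
    (∫ x : ℝ, (Bspline ℓ (x / H - a) : ℂ) * Complex.exp (-(Complex.I * k * x)))
      = (H : ℂ) * Complex.exp (-(Complex.I * ((k * H : ℝ) : ℂ) * (a : ℂ)))
        * ∫ u : ℝ, (Bspline ℓ u : ℂ) * Complex.exp (-(Complex.I * ((k * H : ℝ) : ℂ) * (u : ℂ))) := by
  have h1 : ∀ x : ℝ, (Bspline ℓ (x / H - a) : ℂ) * Complex.exp (-(Complex.I * k * x))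
      = (fun u : ℝ => (Bspline ℓ (u - a) : ℂ)
          * Complex.exp (-(Complex.I * ((k * H : ℝ) : ℂ) * (u : ℂ)))) (x / H) := by
    intro x
    have hHC : (H:ℂ) ≠ 0 := Complex.ofReal_ne_zero.2 hH.ne'
    simp only []
    congr 1
    rw [show -(Complex.I * ((k*H:ℝ):ℂ) * ((x/H : ℝ):ℂ)) = -(Complex.I * (k:ℂ) * (x:ℂ)) by
      push_cast; field_simp]
  simp_rw [h1]
  rw [MeasureTheory.Measure.integral_comp_div (fun u : ℝ => (Bspline ℓ (u - a) : ℂ)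
    * Complex.exp (-(Complex.I * ((k * H : ℝ) : ℂ) * (u : ℂ)))) H]
  have h2 : ∀ u : ℝ, (Bspline ℓ (u - a) : ℂ) * Complex.exp (-(Complex.I * ((k * H : ℝ) : ℂ) * (u : ℂ)))
      = (fun v : ℝ => (Bspline ℓ v : ℂ) * Complex.exp (-(Complex.I * ((k * H : ℝ) : ℂ) * (v : ℂ)))
          * Complex.exp (-(Complex.I * ((k * H : ℝ) : ℂ) * (a : ℂ)))) (u - a) := by
    intro u
    simp only [mul_assoc, ← Complex.exp_add]
    congr 2
    push_cast; ring
  simp_rw [h2]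
  rw [integral_sub_right_eq_self (fun v : ℝ => (Bspline ℓ v : ℂ)
    * Complex.exp (-(Complex.I * ((k * H : ℝ) : ℂ) * (v : ℂ)))
    * Complex.exp (-(Complex.I * ((k * H : ℝ) : ℂ) * (a : ℂ)))) a]
  rw [integral_mul_const, abs_of_pos hH, Complex.real_smul]
  ring

lemma sum_decomp (q : ℕ) (f : ℕ → ℂ) :
    ∑ γ ∈ Finset.range (2*q+1), f γ
      = f q + ∑ i ∈ Finset.range q, (f (q+1+i) + f (q-1-i)) := by
  have h0 : ∑ γ ∈ Finset.range (2*q+1), f γ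
      = ∑ γ ∈ Finset.Ico 0 q, f γ + ∑ γ ∈ Finset.Ico q (2*q+1), f γ := by
    rw [Finset.range_eq_Ico, ← Finset.sum_Ico_consecutive _ (Nat.zero_le q) (by omega)]
  have hA : ∑ γ ∈ Finset.Ico q (2*q+1), f γ = f q + ∑ i ∈ Finset.range q, f (q+1+i) := by
    rw [Finset.sum_eq_sum_Ico_succ_bot (by omega) f, Finset.sum_Ico_eq_sum_range,
      show (2*q+1) - (q+1) = q by omega]
  have hB : ∑ γ ∈ Finset.Ico 0 q, f γ = ∑ i ∈ Finset.range q, f (q-1-i) := by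
    rw [← Finset.range_eq_Ico]
    exact (Finset.sum_range_reflect f q).symm
  rw [h0, hA, hB, Finset.sum_add_distrib]
  ring

theorem stmt_8 (ℓ r : ℕ) (hℓ : 1 ≤ ℓ) (hr : Even r) (c : ℕ → ℝ)
    (hsym : ∀ γ : ℕ, γ ≤ r → c γ = c (r - γ)) (H : ℝ) (hH : 0 < H)
    (KH : ℝ → ℝ)
    (hKH : ∀ x : ℝ, KH x =
      (1 / H) * ∑ γ ∈ Finset.range (r + 1), c γ * Bspline ℓ (x / H - ((γ : ℝ) - (r : ℝ) / 2))) :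
    ∀ k : ℝ, k ≠ 0 →
      (∫ x : ℝ, ((KH x : ℝ) : ℂ) * Complex.exp (-(Complex.I * k * x))) =
        ((((Real.sin (k * H / 2) / (k * H / 2)) ^ ℓ) *
          (c (r / 2) + 2 * ∑ m ∈ Finset.Icc 1 (r / 2), c (r / 2 + m) * Real.cos (m * k * H))
            : ℝ) : ℂ) ∧
      (∫ x : ℝ, ((KH x : ℝ) : ℂ) * Complex.exp (-(Complex.I * k * x))).im = 0 := by
  obtain ⟨n, rfl⟩ : ∃ n, ℓ = n + 1 := ⟨ℓ - 1, by omega⟩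
  obtain ⟨q, hq⟩ := hr
  have hq2 : r = 2 * q := by omega
  intro k hk
  have hkH : k * H ≠ 0 := mul_ne_zero hk hH.ne'
  have hHC : (H : ℂ) ≠ 0 := Complex.ofReal_ne_zero.2 hH.ne'
  have main : (∫ x : ℝ, ((KH x : ℝ) : ℂ) * Complex.exp (-(Complex.I * k * x)))
      = ((((Real.sin (k * H / 2) / (k * H / 2)) ^ (n+1)) *
          (c (r / 2) + 2 * ∑ m ∈ Finset.Icc 1 (r / 2), c (r / 2 + m) * Real.cos (m * k * H))
            : ℝ) : ℂ) := by
    have hrep : ∀ x : ℝ, ((KH x : ℝ) : ℂ) * Complex.exp (-(Complex.I * k * x))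
        = ∑ γ ∈ Finset.range (r+1), ((1/H * c γ : ℝ) : ℂ) *
            ((Bspline (n+1) (x / H - ((γ:ℝ) - (r:ℝ)/2)) : ℂ)
              * Complex.exp (-(Complex.I * k * x))) := by
      intro x
      rw [hKH x]
      push_cast
      rw [Finset.mul_sum, Finset.sum_mul]
      exact Finset.sum_congr rfl (fun γ _ => by ring)
    have hint : ∀ γ ∈ Finset.range (r+1), Integrable (fun x : ℝ => ((1/H * c γ : ℝ) : ℂ) *
        ((Bspline (n+1) (x / H - ((γ:ℝ) - (r:ℝ)/2)) : ℂ)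
          * Complex.exp (-(Complex.I * k * x)))) volume := by
      intro γ _
      apply Integrable.const_mul
      have h1 : Integrable (fun x : ℝ => Bspline (n+1) (x / H - ((γ:ℝ) - (r:ℝ)/2))) :=
        ((Bspline_integrable (n+1)).comp_sub_right ((γ:ℝ) - (r:ℝ)/2)).comp_div hH.ne'
      have h2 := h1.ofReal (𝕜 := ℂ)
      have h3 := h2.bdd_mul (exp_meas k).aestronglyMeasurable
        (Filter.Eventually.of_forall fun x => le_of_eq (norm_exp_eq k x))
      have heq : (fun x : ℝ => (Bspline (n+1) (x / H - ((γ:ℝ) - (r:ℝ)/2)) : ℂ)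
          * Complex.exp (-(Complex.I * k * x)))
          = fun x : ℝ => Complex.exp (-(Complex.I * k * x))
              * ((Bspline (n+1) (x / H - ((γ:ℝ) - (r:ℝ)/2)) : ℝ) : ℂ) := by
        funext x; ring
      rw [heq]; exact h3
    have heval : ∀ γ : ℕ, (∫ x : ℝ, ((1/H * c γ : ℝ) : ℂ) *
        ((Bspline (n+1) (x / H - ((γ:ℝ) - (r:ℝ)/2)) : ℂ)
          * Complex.exp (-(Complex.I * k * x))))
        = (c γ : ℂ) * (Complex.exp (-(Complex.I * ((k*H : ℝ) : ℂ)
            * (((γ:ℝ) - (r:ℝ)/2 : ℝ) : ℂ)))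
          * (((Real.sin (k*H/2) / (k*H/2))^(n+1) : ℝ) : ℂ)) := by
      intro γ
      rw [integral_const_mul, shifted (n+1) H ((γ:ℝ) - (r:ℝ)/2) k hH, Bhat_eq hkH n]
      have key : ∀ z : ℂ, ((1/H * c γ : ℝ) : ℂ) * ((H:ℂ) * z) = (c γ : ℂ) * z := by
        intro z
        have hcc : ((1/H * c γ : ℝ) : ℂ) = (c γ : ℂ) * ((H:ℂ))⁻¹ := by push_cast; ring
        rw [hcc]
        field_simp
      rw [mul_assoc (H:ℂ)]
      exact key _
    have step1 : (∫ x : ℝ, ((KH x : ℝ) : ℂ) * Complex.exp (-(Complex.I * k * x)))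
        = ∑ γ ∈ Finset.range (r+1), (c γ : ℂ) *
            (Complex.exp (-(Complex.I * ((k*H : ℝ) : ℂ) * (((γ:ℝ) - (r:ℝ)/2 : ℝ) : ℂ)))
              * (((Real.sin (k*H/2) / (k*H/2))^(n+1) : ℝ) : ℂ)) := by
      simp_rw [hrep]
      rw [integral_finset_sum _ hint]
      exact Finset.sum_congr rfl fun γ _ => heval γ
    rw [step1]
    have hrange : r + 1 = 2*q + 1 := by omega
    have hr2 : r / 2 = q := by omega
    rw [hrange, sum_decomp q, hr2]
    have h0 : ((q : ℕ) : ℝ) - (r:ℝ)/2 = 0 := by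
      rw [hq2]; push_cast; ring
    rw [h0]
    have hterm : ∀ i ∈ Finset.range q,
        (c (q+1+i) : ℂ) * (Complex.exp (-(Complex.I * ((k*H : ℝ) : ℂ)
            * ((((q+1+i : ℕ):ℝ) - (r:ℝ)/2 : ℝ) : ℂ)))
          * (((Real.sin (k*H/2) / (k*H/2))^(n+1) : ℝ) : ℂ))
        + (c (q-1-i) : ℂ) * (Complex.exp (-(Complex.I * ((k*H : ℝ) : ℂ)
            * ((((q-1-i : ℕ):ℝ) - (r:ℝ)/2 : ℝ) : ℂ)))
          * (((Real.sin (k*H/2) / (k*H/2))^(n+1) : ℝ) : ℂ))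
        = ((c (q+(1+i)) * Real.cos (((1+i : ℕ):ℝ) * k * H) : ℝ) : ℂ)
            * (2 * (((Real.sin (k*H/2) / (k*H/2))^(n+1) : ℝ) : ℂ)) := by
      intro i hi
      have hiq : i < q := Finset.mem_range.1 hi
      have hc : c (q-1-i) = c (q+1+i) := by
        have h := hsym (q-1-i) (by omega)
        rw [h, show r - (q-1-i) = q+1+i by omega]
      have ha1 : ((q+1+i : ℕ):ℝ) - (r:ℝ)/2 = ((1+i : ℕ):ℝ) := by
        rw [hq2]; push_cast; ring
      have ha2 : ((q-1-i : ℕ):ℝ) - (r:ℝ)/2 = -(((1+i : ℕ):ℝ)) := by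
        rw [show (q-1-i : ℕ) = q - (1+i) by omega, Nat.cast_sub (by omega), hq2]
        push_cast; ring
      rw [hc, ha1, ha2, show q+1+i = q+(1+i) by omega]
      have he1 : -(Complex.I * ((k*H : ℝ) : ℂ) * ((((1+i : ℕ):ℝ)) : ℂ))
          = -(Complex.I * ((((1+i : ℕ):ℝ) * k * H : ℝ) : ℂ)) := by push_cast; ring
      have he2 : -(Complex.I * ((k*H : ℝ) : ℂ) * ((-(((1+i : ℕ):ℝ)) : ℝ) : ℂ))
          = Complex.I * ((((1+i : ℕ):ℝ) * k * H : ℝ) : ℂ) := by push_cast; ring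
      rw [he1, he2]
      have := exp_pair (((1+i : ℕ):ℝ) * k * H)
      push_cast at this ⊢
      linear_combination (↑(c (q + (1 + i))) *
        (Complex.sin ((k:ℂ) * (H:ℂ) / 2) / ((k:ℂ) * (H:ℂ) / 2)) ^ (n + 1)) * this
    rw [Finset.sum_congr rfl hterm, ← Finset.sum_mul, ← Complex.ofReal_sum]
    rw [show Finset.Icc 1 q = Finset.Ico 1 (q+1) from (Finset.Ico_add_one_right_eq_Icc 1 q).symm,
      Finset.sum_Ico_eq_sum_range, show q+1-1 = q by omega]
    push_cast
    ring_nf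
    simp [Complex.exp_zero]
  exact ⟨main, by rw [main]; exact Complex.ofReal_im _⟩
end

section
/- Let a < b be real numbers, r and ℓ natural numbers with r + ℓ ≥ 1, and H > 0 with H(r+ℓ) ≤ b − a. Define the shifting function λ : [a,b] → ℝ by λ(x) = min{0, −(r+ℓ)/2 + (x−a)/H} for x ∈ [a, (a+b)/2) and λ(x) = max{0, (r+ℓ)/2 + (x−b)/H} for x ∈ [(a+b)/2, b]. Then for every x ∈ [a,b], the interval [x − H(λ(x) + (r+ℓ)/2), x − H(λ(x) − (r+ℓ)/2)] is contained in [a,b]. -/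
/-!
Write `m = (r + ℓ)/2` and `w = H m`, so the filter support is the interval of half-width `w`
centred at `c = x - H λ(x)`. Multiplying the shift by `H > 0` gives `H λ(x) = min 0 (x - a - w)`
on the left half, so `c = max x (a + w)`: the support is either centred at `x`, which is at
distance at least `w` from `a` and (as `2w ≤ b - a`) from `b`, or it is pushed to `[a, a + 2w]`.
The right half is the mirror image, with `c = min x (b - w)`.
-/

open Set

lemma Icc_sub_mul_subset_Icc {a b x H s m : ℝ} (ha : a ≤ x - H * s - H * m)
    (hb : x - H * s + H * m ≤ b) :
    Icc (x - H * (s + m)) (x - H * (s - m)) ⊆ Icc a b :=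
  Icc_subset_Icc (by linarith [mul_add H s m]) (by linarith [mul_sub H s m])

lemma mul_min_zero_neg_add_div {H m x a : ℝ} (hH : 0 < H) :
    H * min 0 (-m + (x - a) / H) = min 0 (x - a - H * m) := by
  rw [mul_min_of_nonneg _ _ hH.le, mul_zero, mul_add, mul_div_cancel₀ _ hH.ne']
  ring_nf

lemma mul_max_zero_add_div {H m x b : ℝ} (hH : 0 < H) :
    H * max 0 (m + (x - b) / H) = max 0 (x - b + H * m) := by
  rw [mul_max_of_nonneg _ _ hH.le, mul_zero, mul_add, mul_div_cancel₀ _ hH.ne']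
  ring_nf

lemma le_sub_min_zero_sub_and_le {a b x w : ℝ} (hxm : x ≤ (a + b) / 2)
    (hw : 2 * w ≤ b - a) :
    a ≤ x - min 0 (x - a - w) - w ∧ x - min 0 (x - a - w) + w ≤ b := by
  rcases min_cases 0 (x - a - w) with ⟨h, _⟩ | ⟨h, _⟩ <;> rw [h] <;> constructor <;> linarith

lemma le_sub_max_zero_add_and_le {a b x w : ℝ} (hxm : (a + b) / 2 ≤ x)
    (hw : 2 * w ≤ b - a) :
    a ≤ x - max 0 (x - b + w) - w ∧ x - max 0 (x - b + w) + w ≤ b := by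
  rcases max_cases 0 (x - b + w) with ⟨h, _⟩ | ⟨h, _⟩ <;> rw [h] <;> constructor <;> linarith

theorem stmt_12_general (a b : ℝ) (r ℓ : ℕ)
    (H : ℝ) (hH : 0 < H) (hHab : H * ((r : ℝ) + ℓ) ≤ b - a)
    (lam : ℝ → ℝ)
    (hlam₁ : ∀ x ∈ Set.Ico a ((a + b) / 2),
      lam x = min 0 (-(((r : ℝ) + ℓ) / 2) + (x - a) / H))
    (hlam₂ : ∀ x ∈ Set.Icc ((a + b) / 2) b,
      lam x = max 0 (((r : ℝ) + ℓ) / 2 + (x - b) / H)) :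
    ∀ x ∈ Set.Icc a b,
      Set.Icc (x - H * (lam x + ((r : ℝ) + ℓ) / 2)) (x - H * (lam x - ((r : ℝ) + ℓ) / 2)) ⊆
        Set.Icc a b := by
  rintro x ⟨hax, hxb⟩
  have hw : 2 * (H * (((r : ℝ) + ℓ) / 2)) ≤ b - a := by linarith
  rcases lt_or_ge x ((a + b) / 2) with hx | hx
  · obtain ⟨ha, hb⟩ := le_sub_min_zero_sub_and_le hx.le hw
    rw [← mul_min_zero_neg_add_div hH, ← hlam₁ x ⟨hax, hx⟩] at ha hb
    exact Icc_sub_mul_subset_Icc ha hb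
  · obtain ⟨ha, hb⟩ := le_sub_max_zero_add_and_le hx hw
    rw [← mul_max_zero_add_div hH, ← hlam₂ x ⟨hx, hxb⟩] at ha hb
    exact Icc_sub_mul_subset_Icc ha hb

theorem stmt_12 (a b : ℝ) (hab : a < b) (r ℓ : ℕ) (hrℓ : 1 ≤ r + ℓ)
    (H : ℝ) (hH : 0 < H) (hHab : H * ((r : ℝ) + ℓ) ≤ b - a)
    (lam : ℝ → ℝ)
    (hlam₁ : ∀ x ∈ Set.Ico a ((a + b) / 2),
      lam x = min 0 (-(((r : ℝ) + ℓ) / 2) + (x - a) / H))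
    (hlam₂ : ∀ x ∈ Set.Icc ((a + b) / 2) b,
      lam x = max 0 (((r : ℝ) + ℓ) / 2 + (x - b) / H)) :
    ∀ x ∈ Set.Icc a b,
      Set.Icc (x - H * (lam x + ((r : ℝ) + ℓ) / 2)) (x - H * (lam x - ((r : ℝ) + ℓ) / 2)) ⊆
        Set.Icc a b :=
  stmt_12_general a b r ℓ H hH hHab lam hlam₁ hlam₂
end
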